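/- arXiv:1102.2637 — 4 statements merged into one kernel-verified Lean document; each statement's English description precedes it below -/
import Mathlib

section
/- For every integer n ≥ 2 and all pairwise distinct real numbers x₁,…,xₙ, writing σ₁ = ∑ᵢ xᵢ, σ₂ = ∑_{i<j} xᵢxⱼ, σ₃ = ∑_{i<j<k} xᵢxⱼxₖ (with σ₃ = 0 when n = 2), one has: ∑_{i=1}^{n} x_iⁿ / ∏_{j≠i}(x_i − x_j) = σ₁; ∑_{i=1}^{n} x_i^{n+1} / ∏_{j≠i}(x_i − x_j) = σ₁² − σ₂; and ∑_{i=1}^{n} x_i^{n+2} / ∏_{j≠i}(x_i − x_j) = σ₁³ − 2σ₁σ₂ + σ₃. -/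
open Polynomial Finset

noncomputable def uQ (y : ℕ → ℝ) (n : ℕ) : ℝ[X] := ∏ k ∈ Finset.range n, (X - C (y k))
def uE1 (y : ℕ → ℝ) (n : ℕ) : ℝ := ∑ i ∈ Finset.range n, y i
def uE2 (y : ℕ → ℝ) (n : ℕ) : ℝ :=
  ∑ i ∈ Finset.range n, ∑ j ∈ (Finset.range n).filter (fun j => i < j), y i * y j
def uE3 (y : ℕ → ℝ) (n : ℕ) : ℝ :=
  ∑ i ∈ Finset.range n, ∑ j ∈ (Finset.range n).filter (fun j => i < j),
    ∑ k ∈ (Finset.range n).filter (fun k => j < k), y i * y j * y k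

lemma filter_range_succ (n : ℕ) (i : ℕ) (hi : i < n) :
    (Finset.range (n+1)).filter (fun j => i < j)
      = insert n ((Finset.range n).filter (fun j => i < j)) := by
  rw [Finset.range_add_one, Finset.filter_insert, if_pos hi]

lemma uE1_succ (y : ℕ → ℝ) (n : ℕ) : uE1 y (n+1) = uE1 y n + y n :=
  Finset.sum_range_succ y n

lemma uE2_succ (y : ℕ → ℝ) (n : ℕ) : uE2 y (n+1) = uE2 y n + uE1 y n * y n := by
  unfold uE2 uE1
  rw [Finset.sum_range_succ]
  have h0 : (Finset.range (n+1)).filter (fun j => n < j) = ∅ := by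
    apply Finset.filter_false_of_mem
    intro j hj
    simp only [Finset.mem_range] at hj
    omega
  rw [h0, Finset.sum_empty, add_zero, Finset.sum_mul]
  rw [← Finset.sum_add_distrib]
  apply Finset.sum_congr rfl
  intro i hi
  simp only [Finset.mem_range] at hi
  rw [filter_range_succ n i hi, Finset.sum_insert (by simp)]
  ring

lemma uE3_succ (y : ℕ → ℝ) (n : ℕ) : uE3 y (n+1) = uE3 y n + uE2 y n * y n := by
  unfold uE3 uE2
  rw [Finset.sum_range_succ]
  have h0 : (Finset.range (n+1)).filter (fun j => n < j) = ∅ := by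
    apply Finset.filter_false_of_mem
    intro j hj
    simp only [Finset.mem_range] at hj
    omega
  rw [h0, Finset.sum_empty, add_zero, Finset.sum_mul]
  rw [← Finset.sum_add_distrib]
  apply Finset.sum_congr rfl
  intro i hi
  simp only [Finset.mem_range] at hi
  rw [filter_range_succ n i hi, Finset.sum_insert (by simp), h0, Finset.sum_empty, zero_add,
    Finset.sum_mul, ← Finset.sum_add_distrib]
  apply Finset.sum_congr rfl
  intro j hj
  simp only [Finset.mem_filter, Finset.mem_range] at hj
  rw [filter_range_succ n j hj.1, Finset.sum_insert (by simp)]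
  ring

lemma uE3_small (y : ℕ → ℝ) (n : ℕ) (hn : n ≤ 2) : uE3 y n = 0 := by
  simp only [uE3]
  apply Finset.sum_eq_zero; intro i hi
  apply Finset.sum_eq_zero; intro j hj
  apply Finset.sum_eq_zero; intro k hk
  simp only [Finset.mem_filter, Finset.mem_range] at hi hj hk
  omega

lemma uQ_monic (y : ℕ → ℝ) (n : ℕ) : (uQ y n).Monic :=
  monic_prod_of_monic _ _ fun k _ => monic_X_sub_C (y k)

lemma uQ_natDegree (y : ℕ → ℝ) (n : ℕ) : (uQ y n).natDegree = n := by
  unfold uQ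
  rw [natDegree_prod _ _ (fun k _ => X_sub_C_ne_zero (y k))]
  simp [natDegree_X_sub_C]

lemma uQ_coeff_top (y : ℕ → ℝ) (n : ℕ) : (uQ y n).coeff n = 1 := by
  have := (uQ_monic y n).coeff_natDegree
  rwa [uQ_natDegree] at this

lemma uQ_succ (y : ℕ → ℝ) (n : ℕ) : uQ y (n+1) = uQ y n * (X - C (y n)) := by
  unfold uQ; rw [Finset.prod_range_succ]

lemma coeff_step (p : ℝ[X]) (c : ℝ) (m : ℕ) :
    (p * (X - C c)).coeff (m+1) = p.coeff m - c * p.coeff (m+1) := by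
  rw [mul_sub, coeff_sub, coeff_mul_X, coeff_mul_C, mul_comm]

lemma coeff_step0 (p : ℝ[X]) (c : ℝ) :
    (p * (X - C c)).coeff 0 = - c * p.coeff 0 := by
  rw [mul_sub, coeff_sub, coeff_mul_C]
  simp [coeff_mul_X_zero]
  ring

lemma uQ_coeff1 (y : ℕ → ℝ) (m : ℕ) : (uQ y (m+1)).coeff m = -(uE1 y (m+1)) := by
  induction m with
  | zero =>
    rw [uQ_succ, coeff_step0]
    show -(y 0) * (uQ y 0).coeff 0 = _
    have : uQ y 0 = 1 := Finset.prod_range_zero _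
    simp [this, uE1]
  | succ m ih =>
    rw [uQ_succ, coeff_step, ih, uQ_coeff_top, uE1_succ y (m+1)]
    ring

lemma uQ_coeff2 (y : ℕ → ℝ) (m : ℕ) : (uQ y (m+2)).coeff m = uE2 y (m+2) := by
  induction m with
  | zero =>
    rw [uQ_succ, coeff_step0, uQ_coeff1]
    have : uE1 y 1 = y 0 := by simp [uE1]
    rw [this, uE2_succ]
    have h2 : uE2 y 1 = 0 := by
      simp [uE2, Finset.range_one, Finset.filter_singleton]
    have h1 : uE1 y 1 = y 0 := by simp [uE1]
    rw [h2, h1]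
    ring
  | succ m ih =>
    rw [uQ_succ, coeff_step, ih, uQ_coeff1, uE2_succ y (m+2)]
    ring

lemma uQ_coeff3 (y : ℕ → ℝ) (m : ℕ) : (uQ y (m+3)).coeff m = -(uE3 y (m+3)) := by
  induction m with
  | zero =>
    rw [uQ_succ, coeff_step0, uQ_coeff2, uE3_succ]
    rw [uE3_small y 2 (by omega)]
    ring
  | succ m ih =>
    rw [uQ_succ, coeff_step, ih, uQ_coeff2, uE3_succ y (m+3)]
    ring

lemma basis_coeff {n : ℕ} (x : Fin n → ℝ) (hinj : Function.Injective x)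
    (i : Fin n) :
    (Lagrange.basis Finset.univ x i).coeff (n - 1)
      = (∏ j ∈ Finset.univ.erase i, (x i - x j))⁻¹ := by
  have hvs : Set.InjOn x (Finset.univ : Finset (Fin n)) := hinj.injOn
  have hcard : #(Finset.univ : Finset (Fin n)) = n := by simp
  have hdeg : (Lagrange.basis Finset.univ x i).natDegree = n - 1 := by
    rw [Lagrange.natDegree_basis hvs (Finset.mem_univ i), hcard]
  rw [← hdeg, ← Polynomial.leadingCoeff]
  unfold Lagrange.basis
  rw [Polynomial.leadingCoeff_prod, ← Finset.prod_inv_distrib]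
  apply Finset.prod_congr rfl
  intro j hj
  unfold Lagrange.basisDivisor
  rw [Polynomial.leadingCoeff_mul, Polynomial.leadingCoeff_C,
    (Polynomial.monic_X_sub_C (x j)).leadingCoeff, mul_one]

lemma lagrange_sum {n : ℕ} (x : Fin n → ℝ) (hinj : Function.Injective x)
    (m : ℕ) (hm : m < n) :
    ∑ i : Fin n, x i ^ m / ∏ j ∈ Finset.univ.erase i, (x i - x j)
      = if n - 1 = m then 1 else 0 := by
  have hvs : Set.InjOn x (Finset.univ : Finset (Fin n)) := hinj.injOn
  have hcard : #(Finset.univ : Finset (Fin n)) = n := by simp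
  have hdeg : ((X : ℝ[X]) ^ m).degree < #(Finset.univ : Finset (Fin n)) := by
    rw [Polynomial.degree_X_pow, hcard]
    exact_mod_cast hm
  have h := Lagrange.eq_interpolate hvs hdeg
  have h2 := congrArg (fun p : ℝ[X] => p.coeff (n - 1)) h
  simp only [Lagrange.interpolate_apply] at h2
  rw [Polynomial.coeff_X_pow, Polynomial.finset_sum_coeff Finset.univ
    (fun i => C (Polynomial.eval (x i) ((X:ℝ[X]) ^ m)) * Lagrange.basis Finset.univ x i)
    (n-1)] at h2
  rw [h2]
  apply Finset.sum_congr rfl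
  intro i _
  rw [Polynomial.coeff_C_mul, basis_coeff x hinj i]
  simp [Polynomial.eval_pow, div_eq_mul_inv]


/-- **Ushveridze identities.** For `n ≥ 2` and pairwise distinct reals `x 1, …, x n`,
with `σ₁, σ₂, σ₃` the first three elementary symmetric polynomials, the sums
`∑ i, x i ^ m / ∏_{j ≠ i} (x i - x j)` for `m = n, n+1, n+2` are `σ₁`, `σ₁² - σ₂`,
and `σ₁³ - 2σ₁σ₂ + σ₃` respectively. -/
theorem ushveridze_identities (n : ℕ) (hn : 2 ≤ n) (x : Fin n → ℝ)
    (hx : ∀ i j : Fin n, i ≠ j → x i ≠ x j)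
    (σ1 σ2 σ3 : ℝ)
    (hσ1 : σ1 = ∑ i : Fin n, x i)
    (hσ2 : σ2 = ∑ i : Fin n, ∑ j ∈ Finset.univ.filter (fun j => i < j), x i * x j)
    (hσ3 : σ3 = ∑ i : Fin n, ∑ j ∈ Finset.univ.filter (fun j => i < j),
        ∑ k ∈ Finset.univ.filter (fun k => j < k), x i * x j * x k) :
    (∑ i : Fin n, x i ^ n / ∏ j ∈ Finset.univ.erase i, (x i - x j) = σ1) ∧
    (∑ i : Fin n, x i ^ (n + 1) / ∏ j ∈ Finset.univ.erase i, (x i - x j)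
        = σ1 ^ 2 - σ2) ∧
    (∑ i : Fin n, x i ^ (n + 2) / ∏ j ∈ Finset.univ.erase i, (x i - x j)
        = σ1 ^ 3 - 2 * σ1 * σ2 + σ3) := by
  classical
  have hinj : Function.Injective x := by
    intro i j hij
    by_contra hne
    exact hx i j hne hij
  set y : ℕ → ℝ := fun k => if h : k < n then x ⟨k, h⟩ else 0 with hy_def
  have hy : ∀ i : Fin n, y (i : ℕ) = x i := by
    intro i
    simp only [hy_def, i.isLt, dif_pos]
  -- sigma conversions
  have hσ1' : σ1 = uE1 y n := by
    rw [hσ1, uE1, ← Fin.sum_univ_eq_sum_range]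
    exact Finset.sum_congr rfl fun i _ => (hy i).symm
  have hσ2' : σ2 = uE2 y n := by
    rw [hσ2, uE2,
      ← Fin.sum_univ_eq_sum_range
        (fun a => ∑ j ∈ (Finset.range n).filter (fun j => a < j), y a * y j) n]
    apply Finset.sum_congr rfl
    intro i _
    rw [Finset.sum_filter, Finset.sum_filter,
      ← Fin.sum_univ_eq_sum_range (fun b => if (i : ℕ) < b then y (i : ℕ) * y b else 0) n]
    apply Finset.sum_congr rfl
    intro j _
    rw [hy i, hy j]
    by_cases h : i < j
    · rw [if_pos h, if_pos (Fin.lt_def.mp h)]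
    · rw [if_neg h, if_neg (fun hc => h (Fin.lt_def.mpr hc))]
  have hσ3' : σ3 = uE3 y n := by
    rw [hσ3, uE3,
      ← Fin.sum_univ_eq_sum_range
        (fun a => ∑ j ∈ (Finset.range n).filter (fun j => a < j),
          ∑ k ∈ (Finset.range n).filter (fun k => j < k), y a * y j * y k) n]
    apply Finset.sum_congr rfl
    intro i _
    rw [Finset.sum_filter, Finset.sum_filter,
      ← Fin.sum_univ_eq_sum_range
        (fun b => if (i : ℕ) < b then
          ∑ k ∈ (Finset.range n).filter (fun k => b < k), y (i : ℕ) * y b * y k else 0) n]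
    apply Finset.sum_congr rfl
    intro j _
    by_cases hij : i < j
    · rw [if_pos hij, if_pos (Fin.lt_def.mp hij)]
      rw [Finset.sum_filter, Finset.sum_filter,
        ← Fin.sum_univ_eq_sum_range
          (fun c => if (j : ℕ) < c then y (i : ℕ) * y (j : ℕ) * y c else 0) n]
      apply Finset.sum_congr rfl
      intro k _
      rw [hy i, hy j, hy k]
      by_cases h : j < k
      · rw [if_pos h, if_pos (Fin.lt_def.mp h)]
      · rw [if_neg h, if_neg (fun hc => h (Fin.lt_def.mpr hc))]
    · rw [if_neg hij, if_neg (fun hc => hij (Fin.lt_def.mpr hc))]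
  -- the sum function
  set S : ℕ → ℝ := fun m => ∑ i : Fin n, x i ^ m / ∏ j ∈ Finset.univ.erase i, (x i - x j)
    with hS
  have Sbase : ∀ m, m < n → S m = if n - 1 = m then 1 else 0 := by
    intro m hm
    rw [hS]
    exact lagrange_sum x hinj m hm
  -- Vieta expansion
  have heval0 : ∀ i : Fin n, Polynomial.eval (x i) (uQ y n) = 0 := by
    intro i
    unfold uQ
    rw [Polynomial.eval_prod]
    apply Finset.prod_eq_zero (Finset.mem_range.mpr i.isLt)
    simp [hy i]
  have hexp : ∀ i : Fin n, x i ^ n = -∑ k ∈ Finset.range n, (uQ y n).coeff k * x i ^ k := by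
    intro i
    have h0 := heval0 i
    rw [Polynomial.eval_eq_sum_range' (n := n + 1) (by rw [uQ_natDegree]; omega) (x i)] at h0
    rw [Finset.sum_range_succ, uQ_coeff_top, one_mul] at h0
    linarith
  have hrec : ∀ t : ℕ, S (n + t)
      = -∑ k ∈ Finset.range n, (uQ y n).coeff k * S (k + t) := by
    intro t
    have hterm : ∀ i : Fin n,
        x i ^ (n + t) / ∏ j ∈ Finset.univ.erase i, (x i - x j)
          = -∑ k ∈ Finset.range n, (uQ y n).coeff k
              * (x i ^ (k + t) / ∏ j ∈ Finset.univ.erase i, (x i - x j)) := by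
      intro i
      rw [pow_add, hexp i, neg_mul, neg_div, Finset.sum_mul, Finset.sum_div, neg_inj]
      apply Finset.sum_congr rfl
      intro k _
      rw [pow_add]
      ring
    rw [hS]
    simp only []
    rw [Finset.sum_congr rfl fun i _ => hterm i, Finset.sum_neg_distrib, neg_inj,
      Finset.sum_comm]
    exact Finset.sum_congr rfl fun k _ => (Finset.mul_sum _ _ _).symm
  obtain ⟨m, rfl⟩ : ∃ m, n = m + 2 := ⟨n - 2, by omega⟩
  have hsub : m + 2 - 1 = m + 1 := rfl
  -- first identity
  have h1 : S (m + 2) = σ1 := by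
    have := hrec 0
    rw [add_zero] at this
    rw [this, Finset.sum_range_succ, Finset.sum_range_succ]
    have hz : ∀ k ∈ Finset.range m, (uQ y (m+2)).coeff k * S (k + 0) = 0 := by
      intro k hk
      simp only [Finset.mem_range] at hk
      rw [add_zero, Sbase k (by omega), hsub, if_neg (by omega), mul_zero]
    rw [Finset.sum_eq_zero hz, zero_add, add_zero, add_zero,
      Sbase m (by omega), hsub, if_neg (by omega), mul_zero, zero_add,
      Sbase (m+1) (by omega), hsub, if_pos rfl, mul_one, uQ_coeff1, hσ1', neg_neg]
  -- second identity
  have h2 : S (m + 2 + 1) = σ1 ^ 2 - σ2 := by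
    have := hrec 1
    rw [this, Finset.sum_range_succ, Finset.sum_range_succ]
    have hz : ∀ k ∈ Finset.range m, (uQ y (m+2)).coeff k * S (k + 1) = 0 := by
      intro k hk
      simp only [Finset.mem_range] at hk
      rw [Sbase (k+1) (by omega), hsub, if_neg (by omega), mul_zero]
    rw [Finset.sum_eq_zero hz, zero_add,
      Sbase (m+1) (by omega), hsub, if_pos rfl, mul_one,
      show m + 1 + 1 = m + 2 from rfl, h1,
      uQ_coeff1, uQ_coeff2, hσ1', hσ2']
    ring
  -- third identity
  have h3 : S (m + 2 + 2) = σ1 ^ 3 - 2 * σ1 * σ2 + σ3 := by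
    have := hrec 2
    rw [this, Finset.sum_range_succ, Finset.sum_range_succ]
    have hlow : ∑ k ∈ Finset.range m, (uQ y (m+2)).coeff k * S (k + 2) = -σ3 := by
      rcases Nat.eq_zero_or_pos m with hm0 | hm0
      · subst hm0
        rw [Finset.range_zero, Finset.sum_empty, hσ3', uE3_small y (0+2) (by omega)]
        ring
      · obtain ⟨m', rfl⟩ : ∃ m', m = m' + 1 := ⟨m - 1, by omega⟩
        rw [Finset.sum_range_succ]
        have hz : ∀ k ∈ Finset.range m', (uQ y (m'+1+2)).coeff k * S (k + 2) = 0 := by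
          intro k hk
          simp only [Finset.mem_range] at hk
          rw [Sbase (k+2) (by omega), hsub, if_neg (by omega), mul_zero]
        rw [Finset.sum_eq_zero hz, zero_add,
          Sbase (m'+2) (by omega), hsub, if_pos rfl, mul_one,
          show m' + 1 + 2 = m' + 3 from rfl, uQ_coeff3, hσ3']
    rw [hlow, h1, show m + 1 + 2 = m + 2 + 1 from rfl, h2,
      uQ_coeff1, uQ_coeff2, hσ1', hσ2', hσ3']
    ring
  exact ⟨h1, h2, h3⟩
end

section
/- Let n ≥ 2, let U ⊆ ℝⁿ be an open set on which the coordinates are pairwise distinct (x_i ≠ x_j on U for all i ≠ j), and let m₁,…,mₙ : ℝ → ℝ be differentiable. Then the function M(x) = ∑_{i=1}^{n} m_i(x_i) / ∏_{j≠i}(x_i − x_j) satisfies, for all i < j and all x ∈ U, the Euler–Poisson–Darboux equation (x_i − x_j) ∂_i∂_j M − ∂_i M + ∂_j M = 0. -/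
/-!
In the variables `a = x i`, `b = x j` the operator `(a - b) ∂_a ∂_b - ∂_a + ∂_b` is linear, and
every Darboux term depends on `(a, b)` in one of three ways: as `g a / (a - b)` (the `i`-th
term), as `h b / (b - a)` (the `j`-th term), or as `C / ((c - a) (c - b))` with `c = x k` (the
other terms). A direct computation shows that the operator kills each of these three shapes.
-/

/-- The partial derivative of `f : ℝⁿ → ℝ` in the `i`-th coordinate direction,
taken as a line (directional) derivative. -/
noncomputable def pd {n : ℕ} (i : Fin n) (f : (Fin n → ℝ) → ℝ) (x : Fin n → ℝ) : ℝ :=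
  lineDeriv ℝ f x (Pi.single i 1)

open Filter Topology Function Finset

theorem pd_eq_deriv_update {n : ℕ} (i : Fin n) (f : (Fin n → ℝ) → ℝ) (x : Fin n → ℝ) :
    pd i f x = deriv (fun a => f (update x i a)) (x i) := by
  have hline (t : ℝ) : x + t • Pi.single i (1 : ℝ) = update x i (x i + t) := by
    ext l
    rcases eq_or_ne l i with rfl | hl <;> simp [*]
  simp only [pd, lineDeriv, hline]
  rw [deriv_comp_const_add (fun a => f (update x i a)), add_zero]

theorem epd_eq_deriv_update_update {n : ℕ} {i j : Fin n} (hij : i ≠ j)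
    (f : (Fin n → ℝ) → ℝ) (x : Fin n → ℝ) :
    (x i - x j) * pd i (pd j f) x - pd i f x + pd j f x =
      (x i - x j) * deriv (fun a => deriv (fun b => f (update (update x i a) j b)) (x j)) (x i)
        - deriv (fun a => f (update (update x i a) j (x j))) (x i)
        + deriv (fun b => f (update (update x i (x i)) j b)) (x j) := by
  have hxj (a : ℝ) : update x i a j = x j := update_of_ne hij.symm a x
  have hpdj (a : ℝ) :
      pd j f (update x i a) = deriv (fun b => f (update (update x i a) j b)) (x j) := by
    rw [pd_eq_deriv_update, hxj]
  have hupd (a : ℝ) : update (update x i a) j (x j) = update x i a := by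
    rw [← hxj a, update_eq_self]
  simp only [pd_eq_deriv_update i (pd j f), hpdj, pd_eq_deriv_update i f,
    pd_eq_deriv_update j f, hupd, update_eq_self]

/-- `∂_b Φ` is required for all first arguments near `a`, so that `∂_a ∂_b Φ` is a genuine
derivative; unlike the EPD equation between `deriv`s (which are `0` where undefined), this
property is stable under sums. -/
def IsEPDSolutionAt (Φ : ℝ → ℝ → ℝ) (a b : ℝ) : Prop :=
  ∃ (Φb : ℝ → ℝ) (Φa Φab : ℝ), (∀ᶠ a' in 𝓝 a, HasDerivAt (Φ a') (Φb a') b) ∧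
    HasDerivAt (fun a' => Φ a' b) Φa a ∧ HasDerivAt Φb Φab a ∧ (a - b) * Φab - Φa + Φb a = 0

namespace IsEPDSolutionAt

variable {Φ Ψ : ℝ → ℝ → ℝ} {a b : ℝ}

theorem zero : IsEPDSolutionAt 0 a b :=
  ⟨0, 0, 0, .of_forall fun _ => hasDerivAt_const _ _, hasDerivAt_const _ _, hasDerivAt_const _ _,
    by simp⟩

theorem add (hΦ : IsEPDSolutionAt Φ a b) (hΨ : IsEPDSolutionAt Ψ a b) :
    IsEPDSolutionAt (Φ + Ψ) a b := by
  obtain ⟨Φb, Φa, Φab, hb, ha, hab, hΦ⟩ := hΦ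
  obtain ⟨Ψb, Ψa, Ψab, hb', ha', hab', hΨ⟩ := hΨ
  refine ⟨Φb + Ψb, Φa + Ψa, Φab + Ψab, ?_, ha.add ha', hab.add hab', ?_⟩
  · filter_upwards [hb, hb'] with a' h h' using h.add h'
  · simp only [Pi.add_apply]
    linear_combination hΦ + hΨ

theorem sum {ι : Type*} {s : Finset ι} {Φ : ι → ℝ → ℝ → ℝ}
    (hΦ : ∀ k ∈ s, IsEPDSolutionAt (Φ k) a b) :
    IsEPDSolutionAt (fun a' b' => ∑ k ∈ s, Φ k a' b') a b := by
  have hsum : (fun a' b' => ∑ k ∈ s, Φ k a' b') = ∑ k ∈ s, Φ k := by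
    ext; simp only [Finset.sum_apply]
  rw [hsum]
  exact Finset.sum_induction Φ (IsEPDSolutionAt · a b) (fun _ _ => add) zero hΦ

theorem epd_eq_zero (hΦ : IsEPDSolutionAt Φ a b) :
    (a - b) * deriv (fun a' => deriv (Φ a') b) a - deriv (fun a' => Φ a' b) a
      + deriv (Φ a) b = 0 := by
  obtain ⟨Φb, Φa, Φab, hb, ha, hab, hΦ⟩ := hΦ
  rw [(hab.congr_of_eventuallyEq (hb.mono fun a' h => h.deriv)).deriv, ha.deriv,
    hb.self_of_nhds.deriv, hΦ]

end IsEPDSolutionAt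

theorem isEPDSolutionAt_div_sub_left {g : ℝ → ℝ} {a b : ℝ} (hg : DifferentiableAt ℝ g a)
    (hab : a ≠ b) : IsEPDSolutionAt (fun a' b' => g a' / (a' - b')) a b := by
  have hab' : a - b ≠ 0 := sub_ne_zero.2 hab
  refine ⟨fun a' => g a' / (a' - b) ^ 2, deriv g a / (a - b) - g a / (a - b) ^ 2,
    deriv g a / (a - b) ^ 2 - 2 * g a / (a - b) ^ 3, ?_, ?_, ?_, ?_⟩
  · filter_upwards [eventually_ne_nhds hab] with a' ha'
    have := (hasDerivAt_const b (g a')).fun_div ((hasDerivAt_id' b).const_sub a')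
      (sub_ne_zero.2 ha')
    exact this.congr_deriv (by simp)
  · have := hg.hasDerivAt.fun_div ((hasDerivAt_id' a).sub_const b) hab'
    exact this.congr_deriv (by field_simp)
  · have := hg.hasDerivAt.fun_div (((hasDerivAt_id' a).sub_const b).fun_pow 2) (pow_ne_zero 2 hab')
    exact this.congr_deriv (by field_simp; ring)
  · field_simp
    ring

theorem isEPDSolutionAt_div_sub_right {h : ℝ → ℝ} {a b : ℝ} (hh : DifferentiableAt ℝ h b)
    (hab : a ≠ b) : IsEPDSolutionAt (fun a' b' => h b' / (b' - a')) a b := by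
  have hba : b - a ≠ 0 := sub_ne_zero.2 hab.symm
  refine ⟨fun a' => deriv h b / (b - a') - h b / (b - a') ^ 2, h b / (b - a) ^ 2,
    deriv h b / (b - a) ^ 2 - 2 * h b / (b - a) ^ 3, ?_, ?_, ?_, ?_⟩
  · filter_upwards [eventually_ne_nhds hab] with a' ha'
    have := hh.hasDerivAt.fun_div ((hasDerivAt_id' b).sub_const a') (sub_ne_zero.2 ha'.symm)
    exact this.congr_deriv (by field_simp)
  · have := (hasDerivAt_const a (h b)).fun_div ((hasDerivAt_id' a).const_sub b) hba
    exact this.congr_deriv (by simp)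
  · have hb := ((hasDerivAt_id' a).const_sub b).fun_pow 2
    have := ((hasDerivAt_const a (deriv h b)).fun_div ((hasDerivAt_id' a).const_sub b) hba).sub
      ((hasDerivAt_const a (h b)).fun_div hb (pow_ne_zero 2 hba))
    exact this.congr_deriv (by field_simp; ring)
  · field_simp
    ring

theorem isEPDSolutionAt_div_sub_mul_sub {C c a b : ℝ} (hca : c ≠ a) (hcb : c ≠ b) :
    IsEPDSolutionAt (fun a' b' => C / ((c - a') * (c - b'))) a b := by
  have hca' : c - a ≠ 0 := sub_ne_zero.2 hca
  have hcb' : c - b ≠ 0 := sub_ne_zero.2 hcb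
  refine ⟨fun a' => C / ((c - a') * (c - b) ^ 2), C / ((c - a) ^ 2 * (c - b)),
    C / ((c - a) ^ 2 * (c - b) ^ 2), ?_, ?_, ?_, ?_⟩
  · filter_upwards [eventually_ne_nhds hca.symm] with a' ha'
    have := (hasDerivAt_const b C).fun_div (((hasDerivAt_id' b).const_sub c).const_mul (c - a'))
      (mul_ne_zero (sub_ne_zero.2 (Ne.symm ha')) hcb')
    exact this.congr_deriv (by field_simp; ring)
  · have := (hasDerivAt_const a C).fun_div (((hasDerivAt_id' a).const_sub c).mul_const (c - b))
      (mul_ne_zero hca' hcb')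
    exact this.congr_deriv (by field_simp; ring)
  · have := (hasDerivAt_const a C).fun_div
      (((hasDerivAt_id' a).const_sub c).mul_const ((c - b) ^ 2))
      (mul_ne_zero hca' (pow_ne_zero 2 hcb'))
    exact this.congr_deriv (by field_simp; ring)
  · field_simp
    ring

noncomputable def darbouxTerm {ι : Type*} [Fintype ι] [DecidableEq ι] (μ : ℝ → ℝ) (k : ι)
    (y : ι → ℝ) : ℝ :=
  μ (y k) / ∏ l ∈ univ.erase k, (y k - y l)

theorem differentiableAt_div_prod_sub {ι : Type*} {μ : ℝ → ℝ} {s : Finset ι} {x : ι → ℝ} {a : ℝ}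
    (hμ : DifferentiableAt ℝ μ a) (hs : ∀ l ∈ s, a ≠ x l) :
    DifferentiableAt ℝ (fun t => μ t / ∏ l ∈ s, (t - x l)) a :=
  hμ.div (DifferentiableAt.fun_finsetProd fun l _ => differentiableAt_id.sub_const (x l))
    (prod_ne_zero_iff.2 fun l hl => sub_ne_zero.2 (hs l hl))

theorem isEPDSolutionAt_darbouxTerm {ι : Type*} [Fintype ι] [DecidableEq ι] {i j : ι}
    (hij : i ≠ j) {x : ι → ℝ} (hx : Injective x) {μ : ℝ → ℝ} {k : ι}
    (hμ : DifferentiableAt ℝ μ (x k)) :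
    IsEPDSolutionAt (fun a b => darbouxTerm μ k (update (update x i a) j b)) (x i) (x j) := by
  have hxk {s : Finset ι} (hs : s ⊆ univ.erase k) : ∀ l ∈ s, x k ≠ x l :=
    fun l hl => hx.ne (ne_of_mem_erase (hs hl)).symm
  rcases eq_or_ne k i with rfl | hki
  · have hT (a b : ℝ) : darbouxTerm μ k (update (update x k a) j b) =
        (μ a / ∏ l ∈ (univ.erase k).erase j, (a - x l)) / (a - b) := by
      rw [darbouxTerm, div_div, ← mul_prod_erase _ _ (mem_erase.2 ⟨hij.symm, mem_univ j⟩)]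
      simp (disch := grind) [update_of_ne, mul_comm]
    simp only [hT]
    exact isEPDSolutionAt_div_sub_left
      (differentiableAt_div_prod_sub hμ (hxk (erase_subset _ _))) (hx.ne hij)
  rcases eq_or_ne k j with rfl | hkj
  · have hT (a b : ℝ) : darbouxTerm μ k (update (update x i a) k b) =
        (μ b / ∏ l ∈ (univ.erase k).erase i, (b - x l)) / (b - a) := by
      rw [darbouxTerm, div_div, ← mul_prod_erase _ _ (mem_erase.2 ⟨hij, mem_univ i⟩)]
      simp (disch := grind) [update_of_ne, mul_comm]
    simp only [hT]
    exact isEPDSolutionAt_div_sub_right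
      (differentiableAt_div_prod_sub hμ (hxk (erase_subset _ _))) (hx.ne hij)
  · have hT (a b : ℝ) : darbouxTerm μ k (update (update x i a) j b) =
        (μ (x k) / ∏ l ∈ ((univ.erase k).erase i).erase j, (x k - x l)) /
          ((x k - a) * (x k - b)) := by
      rw [darbouxTerm, div_div, ← mul_prod_erase (univ.erase k) _ (by simpa using hki.symm),
        ← mul_prod_erase ((univ.erase k).erase i) _ (a := j) (by simp [hkj.symm, hij.symm])]
      simp (disch := grind) [update_of_ne]
      ring
    simp only [hT]
    exact isEPDSolutionAt_div_sub_mul_sub (hx.ne hki) (hx.ne hkj)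

theorem epd_of_darboux_form_general (n : ℕ)
    (U : Set (Fin n → ℝ))
    (hdist : ∀ x ∈ U, ∀ i j : Fin n, i ≠ j → x i ≠ x j)
    (m : Fin n → ℝ → ℝ) (hm : ∀ i, Differentiable ℝ (m i))
    (M : (Fin n → ℝ) → ℝ)
    (hM : ∀ x, M x = ∑ i : Fin n, m i (x i) / ∏ j ∈ Finset.univ.erase i, (x i - x j)) :
    ∀ i j : Fin n, i < j → ∀ x ∈ U,
      (x i - x j) * pd i (pd j M) x - pd i M x + pd j M x = 0 := by
  intro i j hij x hx
  have hM' : M = fun y => ∑ k, darbouxTerm (m k) k y := funext hM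
  have hsol : IsEPDSolutionAt (fun a b => M (update (update x i a) j b)) (x i) (x j) := by
    simpa only [hM'] using IsEPDSolutionAt.sum fun k _ =>
      isEPDSolutionAt_darbouxTerm hij.ne
        (fun k l => not_imp_not.1 (hdist x hx k l)) (hm k _)
  rw [epd_eq_deriv_update_update hij.ne]
  exact hsol.epd_eq_zero

/-- Darboux's function `M(x) = ∑ i, m i (x i) / ∏_{j ≠ i} (x i - x j)` solves the
Euler–Poisson–Darboux system `(x i - x j) ∂ᵢ∂ⱼM - ∂ᵢM + ∂ⱼM = 0` (`i < j`) on any open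
set `U` on which the coordinates are pairwise distinct, provided the `m i` are
differentiable. -/
theorem epd_of_darboux_form (n : ℕ) (hn : 2 ≤ n)
    (U : Set (Fin n → ℝ)) (hU : IsOpen U)
    (hdist : ∀ x ∈ U, ∀ i j : Fin n, i ≠ j → x i ≠ x j)
    (m : Fin n → ℝ → ℝ) (hm : ∀ i, Differentiable ℝ (m i))
    (M : (Fin n → ℝ) → ℝ)
    (hM : ∀ x, M x = ∑ i : Fin n, m i (x i) / ∏ j ∈ Finset.univ.erase i, (x i - x j)) :
    ∀ i j : Fin n, i < j → ∀ x ∈ U,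
      (x i - x j) * pd i (pd j M) x - pd i M x + pd j M x = 0 :=
  epd_of_darboux_form_general n U hdist m hm M hM
end

section
/- Let n ≥ 2 and let U = I₁×⋯×Iₙ ⊆ ℝⁿ be an open box carrying a diagonal metric with smooth positive Lamé coefficients H₁,…,Hₙ, h = H₁⋯Hₙ, and Δψ = h⁻¹ ∑ᵢ ∂ᵢ((h/Hᵢ²)∂ᵢψ). Let V : U → ℝ be continuous, k ∈ ℝ, and R : U → ℝ smooth and positive. Suppose there are continuous functions pᵢ, qᵢ : Iᵢ → ℝ such that ∂ᵢ ln(R² h/Hᵢ²)(u) = pᵢ(uⁱ) on U for each i, and the R-equation ΔR + (k² − V − ∑ᵢ qᵢ/Hᵢ²)R = 0 holds on U. Then for every choice of C² functions φᵢ : Iᵢ → ℝ with φᵢ'' + pᵢφᵢ' + qᵢφᵢ = 0, the function ψ(u) = R(u)·∏ᵢ φᵢ(uⁱ) satisfies the Schrödinger equation Δψ + (k² − V)ψ = 0 on U. -/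
set_option maxHeartbeats 1000000 in
/-- **Sufficiency of the two conditions of R-separability (Theorem 3, "if" part).**
On an open box `U = I₁ × ⋯ × Iₙ` with diagonal metric given by smooth positive Lamé
coefficients `Hᵢ`, `h = H₁⋯Hₙ` and Laplace–Beltrami operator
`Δψ = h⁻¹ ∑ᵢ ∂ᵢ((h/Hᵢ²)∂ᵢψ)`: if `∂ᵢ ln(R² h/Hᵢ²) = pᵢ(uⁱ)` on `U` and the `R`-equation
`ΔR + (k² - V - ∑ᵢ qᵢ/Hᵢ²) R = 0` holds on `U`, then for all `C²` solutions `φᵢ` of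
`φᵢ'' + pᵢφᵢ' + qᵢφᵢ = 0` the function `ψ = R·∏ᵢφᵢ(uⁱ)` satisfies the Schrödinger
equation `Δψ + (k² - V)ψ = 0` on `U`. -/
theorem R_separability_sufficient (n : ℕ) (hn : 2 ≤ n)
    (I : Fin n → Set ℝ) (hIo : ∀ i, IsOpen (I i)) (hIc : ∀ i, (I i).OrdConnected)
    (U : Set (Fin n → ℝ)) (hU : U = {u | ∀ i, u i ∈ I i})
    (H : Fin n → (Fin n → ℝ) → ℝ) (hH : ∀ i, ContDiffOn ℝ (⊤ : ℕ∞) (H i) U)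
    (hHpos : ∀ i, ∀ u ∈ U, 0 < H i u)
    (h : (Fin n → ℝ) → ℝ) (hh : ∀ u, h u = ∏ i, H i u)
    (V : (Fin n → ℝ) → ℝ) (hV : ContinuousOn V U) (k : ℝ)
    (R : (Fin n → ℝ) → ℝ) (hR : ContDiffOn ℝ (⊤ : ℕ∞) R U) (hRpos : ∀ u ∈ U, 0 < R u)
    (p q : Fin n → ℝ → ℝ)
    (hp : ∀ i, ContinuousOn (p i) (I i)) (hq : ∀ i, ContinuousOn (q i) (I i))
    (hfirst : ∀ i, ∀ u ∈ U,
      pd i (fun v => Real.log (R v ^ 2 * h v / H i v ^ 2)) u = p i (u i))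
    (hReq : ∀ u ∈ U,
      (h u)⁻¹ * ∑ i, pd i (fun v => h v / H i v ^ 2 * pd i R v) u
        + (k ^ 2 - V u - ∑ i, q i (u i) / H i u ^ 2) * R u = 0)
    (φ : Fin n → ℝ → ℝ) (hφ : ∀ i, ContDiffOn ℝ 2 (φ i) (I i))
    (hode : ∀ i, ∀ x ∈ I i,
      deriv (deriv (φ i)) x + p i x * deriv (φ i) x + q i x * φ i x = 0)
    (ψ : (Fin n → ℝ) → ℝ) (hψ : ∀ u, ψ u = R u * ∏ i, φ i (u i)) :
    ∀ u ∈ U,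
      (h u)⁻¹ * ∑ i, pd i (fun v => h v / H i v ^ 2 * pd i ψ v) u
        + (k ^ 2 - V u) * ψ u = 0 := by
  have hUo : IsOpen U := by
    have : U = Set.univ.pi I := by rw [hU]; ext x; simp [Set.mem_pi]
    rw [this]
    exact isOpen_set_pi Set.finite_univ fun i _ => hIo i
  have hmem : ∀ v ∈ U, ∀ j, v j ∈ I j := by intro v hv j; rw [hU] at hv; exact hv j
  have hRc : ∀ v ∈ U, ContDiffAt ℝ (⊤ : ℕ∞) R v := fun v hv => hR.contDiffAt (hUo.mem_nhds hv)
  have hRd : ∀ v ∈ U, DifferentiableAt ℝ R v := fun v hv =>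
    (hRc v hv).differentiableAt (by simp)
  have hHd : ∀ j, ∀ v ∈ U, DifferentiableAt ℝ (H j) v := fun j v hv =>
    ((hH j).contDiffAt (hUo.mem_nhds hv)).differentiableAt (by simp)
  have hhfun : h = fun w => ∏ j, H j w := funext hh
  have hhd : ∀ v ∈ U, DifferentiableAt ℝ h v := by
    intro v hv
    rw [hhfun]
    exact (HasFDerivAt.finset_prod (fun j _ => (hHd j v hv).hasFDerivAt)).differentiableAt
  have hhpos : ∀ v ∈ U, 0 < h v := fun v hv => by
    rw [hh]; exact Finset.prod_pos fun j _ => hHpos j v hv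
  have hhne : ∀ v ∈ U, h v ≠ 0 := fun v hv => (hhpos v hv).ne'
  have hHne : ∀ j, ∀ v ∈ U, H j v ≠ 0 := fun j v hv => (hHpos j v hv).ne'
  have had : ∀ i : Fin n, ∀ v ∈ U, DifferentiableAt ℝ (fun w => h w / H i w ^ 2) v := by
    intro i v hv
    have h1 : DifferentiableAt ℝ (fun w => H i w ^ 2) v := DifferentiableAt.pow (hHd i v hv) 2
    have h2 : DifferentiableAt ℝ (fun w => (H i w ^ 2)⁻¹) v :=
      h1.inv (pow_ne_zero 2 (hHne i v hv))
    have h3 : (fun w => h w / H i w ^ 2) = fun w => h w * (H i w ^ 2)⁻¹ := by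
      funext w; rw [div_eq_mul_inv]
    rw [h3]
    exact (hhd v hv).mul h2
  have hφd : ∀ j, ∀ x ∈ I j, DifferentiableAt ℝ (φ j) x := fun j x hx =>
    ((hφ j).contDiffAt ((hIo j).mem_nhds hx)).differentiableAt (by norm_num)
  have hφ'd : ∀ j, ∀ x ∈ I j, DifferentiableAt ℝ (deriv (φ j)) x := by
    intro j x hx
    have h1 : ContDiffOn ℝ 1 (deriv (φ j)) (I j) :=
      (hφ j).deriv_of_isOpen (hIo j) (by norm_num)
    exact (h1.differentiableOn one_ne_zero).differentiableAt ((hIo j).mem_nhds hx)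
  -- line derivative helper
  have lineD : ∀ (f : (Fin n → ℝ) → ℝ) (x w : Fin n → ℝ), DifferentiableAt ℝ f x →
      HasDerivAt (fun t : ℝ => f (x + t • w)) (fderiv ℝ f x w) 0 :=
    fun f x w hf => hf.hasFDerivAt.hasLineDerivAt w
  have shiftD : ∀ (g : ℝ → ℝ) (c : ℝ), DifferentiableAt ℝ g c →
      HasDerivAt (fun t : ℝ => g (c + t)) (deriv g c) 0 := by
    intro g c hg
    have h1 : HasDerivAt (fun t : ℝ => c + t) 1 0 := by
      simpa using (hasDerivAt_id (0 : ℝ)).const_add c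
    have h2 : HasDerivAt g (deriv g c) ((fun t : ℝ => c + t) 0) := by
      simpa using hg.hasDerivAt
    simpa [Function.comp_def] using h2.comp 0 h1
  have coord_same : ∀ (x : Fin n → ℝ) (i : Fin n) (t : ℝ),
      (x + t • (Pi.single i 1 : Fin n → ℝ)) i = x i + t := by
    intro x i t; simp
  have coord_ne : ∀ (x : Fin n → ℝ) (i j : Fin n) (t : ℝ), j ≠ i →
      (x + t • (Pi.single i 1 : Fin n → ℝ)) j = x j := by
    intro x i j t hj; simp [Pi.single_eq_of_ne hj]
  have lmem : ∀ (i : Fin n), ∀ v ∈ U, ∀ᶠ t : ℝ in nhds 0, v + t • (Pi.single i 1 : Fin n → ℝ) ∈ U := by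
    intro i v hv
    have hc : Continuous fun t : ℝ => v + t • (Pi.single i 1 : Fin n → ℝ) := by continuity
    have h2 : (fun t : ℝ => v + t • (Pi.single i 1 : Fin n → ℝ)) ⁻¹' U ∈ nhds (0 : ℝ) :=
      hc.continuousAt.preimage_mem_nhds (by simpa using hUo.mem_nhds hv)
    exact h2
  have hpdR : ∀ (i : Fin n), ∀ v ∈ U, pd i R v = fderiv ℝ R v ((Pi.single i 1 : Fin n → ℝ)) := by
    intro i v hv
    simp only [pd]
    exact (hRd v hv).lineDeriv_eq_fderiv
  have hR'd : ∀ (i : Fin n), ∀ v ∈ U,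
      DifferentiableAt ℝ (fun w => fderiv ℝ R w ((Pi.single i 1 : Fin n → ℝ))) v := by
    intro i v hv
    have h1 : ContDiffAt ℝ 1 (fderiv ℝ R) v := (hRc v hv).fderiv_right (by exact WithTop.coe_le_coe.mpr le_top)
    exact (h1.differentiableAt one_ne_zero).clm_apply (differentiableAt_const _)
  -- eq1 : formula for pd i ψ on U
  have eq1 : ∀ (i : Fin n), ∀ v ∈ U, pd i ψ v =
      (fderiv ℝ R v ((Pi.single i 1 : Fin n → ℝ)) * φ i (v i) + R v * deriv (φ i) (v i)) *
        ∏ j ∈ Finset.univ.erase i, φ j (v j) := by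
    intro i v hv
    have hfun : (fun t : ℝ => ψ (v + t • (Pi.single i 1 : Fin n → ℝ))) =
        fun t => R (v + t • (Pi.single i 1 : Fin n → ℝ)) *
          (φ i (v i + t) * ∏ j ∈ Finset.univ.erase i, φ j (v j)) := by
      funext t
      rw [hψ]
      congr 1
      rw [← Finset.mul_prod_erase Finset.univ
        (fun j => φ j ((v + t • (Pi.single i 1 : Fin n → ℝ)) j)) (Finset.mem_univ i)]
      rw [coord_same]
      congr 1
      exact Finset.prod_congr rfl fun j hj => by
        rw [coord_ne v i j t (Finset.ne_of_mem_erase hj)]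
    have hD : HasDerivAt (fun t : ℝ => ψ (v + t • (Pi.single i 1 : Fin n → ℝ)))
        (fderiv ℝ R v ((Pi.single i 1 : Fin n → ℝ)) *
            (φ i (v i) * ∏ j ∈ Finset.univ.erase i, φ j (v j))
          + R v * (deriv (φ i) (v i) * ∏ j ∈ Finset.univ.erase i, φ j (v j))) 0 := by
      rw [hfun]
      have hRl := lineD R v ((Pi.single i 1 : Fin n → ℝ)) (hRd v hv)
      have hphi := (shiftD (φ i) (v i) (hφd i (v i) (hmem v hv i))).mul_const
        (∏ j ∈ Finset.univ.erase i, φ j (v j))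
      have := hRl.mul hphi
      simpa [add_zero, Pi.mul_def] using this
    simp only [pd, lineDeriv]
    rw [hD.deriv]
    ring
  intro u hu
  -- per-coordinate key identity
  have key : ∀ i : Fin n,
      pd i (fun v => h v / H i v ^ 2 * pd i ψ v) u =
        pd i (fun v => h v / H i v ^ 2 * pd i R v) u * ∏ j, φ j (u j)
          - q i (u i) * (h u / H i u ^ 2) * R u * ∏ j, φ j (u j) := by
    intro i
    have hA := lineD (fun w => h w / H i w ^ 2) u ((Pi.single i 1 : Fin n → ℝ)) (had i u hu)
    have hRl := lineD R u ((Pi.single i 1 : Fin n → ℝ)) (hRd u hu)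
    have hG := lineD (fun w => fderiv ℝ R w ((Pi.single i 1 : Fin n → ℝ))) u ((Pi.single i 1 : Fin n → ℝ)) (hR'd i u hu)
    have hphi1 : HasDerivAt (fun t : ℝ => φ i (u i + t)) (deriv (φ i) (u i)) 0 :=
      shiftD _ _ (hφd i (u i) (hmem u hu i))
    have hphi2 : HasDerivAt (fun t : ℝ => deriv (φ i) (u i + t)) (deriv (deriv (φ i)) (u i)) 0 :=
      shiftD _ _ (hφ'd i (u i) (hmem u hu i))
    -- D1 computation
    have hD1 : pd i (fun v => h v / H i v ^ 2 * pd i R v) u =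
        fderiv ℝ (fun w => h w / H i w ^ 2) u ((Pi.single i 1 : Fin n → ℝ)) * fderiv ℝ R u ((Pi.single i 1 : Fin n → ℝ))
          + (h u / H i u ^ 2) * fderiv ℝ (fun w => fderiv ℝ R w ((Pi.single i 1 : Fin n → ℝ))) u ((Pi.single i 1 : Fin n → ℝ)) := by
      have hev : (fun t : ℝ => (h (u + t • (Pi.single i 1 : Fin n → ℝ)) / H i (u + t • (Pi.single i 1 : Fin n → ℝ)) ^ 2)
            * pd i R (u + t • (Pi.single i 1 : Fin n → ℝ))) =ᶠ[nhds (0 : ℝ)]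
          fun t => (h (u + t • (Pi.single i 1 : Fin n → ℝ)) / H i (u + t • (Pi.single i 1 : Fin n → ℝ)) ^ 2)
            * fderiv ℝ R (u + t • (Pi.single i 1 : Fin n → ℝ)) ((Pi.single i 1 : Fin n → ℝ)) := by
        filter_upwards [lmem i u hu] with t ht
        rw [hpdR i _ ht]
      have hDer := hA.mul hG
      simp only [zero_smul, add_zero] at hDer
      have h3 := hDer.congr_of_eventuallyEq hev
      have hL0 : pd i (fun v => h v / H i v ^ 2 * pd i R v) u
          = deriv (fun t : ℝ => h (u + t • (Pi.single i 1 : Fin n → ℝ))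
              / H i (u + t • (Pi.single i 1 : Fin n → ℝ)) ^ 2
              * pd i R (u + t • (Pi.single i 1 : Fin n → ℝ))) 0 := rfl
      rw [hL0]
      exact h3.deriv
    -- main derivative computation
    have hev2 : (fun t : ℝ => (h (u + t • (Pi.single i 1 : Fin n → ℝ)) / H i (u + t • (Pi.single i 1 : Fin n → ℝ)) ^ 2)
          * pd i ψ (u + t • (Pi.single i 1 : Fin n → ℝ))) =ᶠ[nhds (0 : ℝ)]
        fun t => (h (u + t • (Pi.single i 1 : Fin n → ℝ)) / H i (u + t • (Pi.single i 1 : Fin n → ℝ)) ^ 2) *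
          ((fderiv ℝ R (u + t • (Pi.single i 1 : Fin n → ℝ)) ((Pi.single i 1 : Fin n → ℝ)) * φ i (u i + t)
            + R (u + t • (Pi.single i 1 : Fin n → ℝ)) * deriv (φ i) (u i + t)) *
              ∏ j ∈ Finset.univ.erase i, φ j (u j)) := by
      filter_upwards [lmem i u hu] with t ht
      rw [eq1 i _ ht]
      have hprod : ∏ j ∈ Finset.univ.erase i, φ j ((u + t • (Pi.single i 1 : Fin n → ℝ)) j)
          = ∏ j ∈ Finset.univ.erase i, φ j (u j) :=
        Finset.prod_congr rfl fun j hj => by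
          rw [coord_ne u i j t (Finset.ne_of_mem_erase hj)]
      rw [coord_same u i t, hprod]
    have hDer2 := hA.mul (((hG.mul hphi1).add (hRl.mul hphi2)).mul_const
      (∏ j ∈ Finset.univ.erase i, φ j (u j)))
    simp only [zero_smul, add_zero, Pi.mul_apply, Pi.add_apply] at hDer2
    have h4 := hDer2.congr_of_eventuallyEq hev2
    -- first-condition equation
    have hinner := (hRl.pow 2).mul hA
    have hx0 : R (u + (0 : ℝ) • (Pi.single i 1 : Fin n → ℝ)) ^ 2 *
        (h (u + (0 : ℝ) • (Pi.single i 1 : Fin n → ℝ)) / H i (u + (0 : ℝ) • (Pi.single i 1 : Fin n → ℝ)) ^ 2) ≠ 0 := by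
      simp only [zero_smul, add_zero]
      exact mul_ne_zero (pow_ne_zero 2 (hRpos u hu).ne')
        (div_ne_zero (hhne u hu) (pow_ne_zero 2 (hHne i u hu)))
    have hlog := hinner.log hx0
    have h2 := hfirst i u hu
    have hfun3 : (fun v => Real.log (R v ^ 2 * h v / H i v ^ 2)) =
        fun v => Real.log (R v ^ 2 * (h v / H i v ^ 2)) := by
      funext v; rw [mul_div_assoc]
    rw [hfun3] at h2
    simp only [pd, lineDeriv] at h2
    simp only [Pi.mul_apply, Pi.pow_apply] at hlog
    rw [hlog.deriv] at h2
    simp only [zero_smul, add_zero] at h2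
    rw [div_eq_iff (mul_ne_zero (pow_ne_zero 2 (hRpos u hu).ne')
      (div_ne_zero (hhne u hu) (pow_ne_zero 2 (hHne i u hu))))] at h2
    -- ODE
    have hodei := hode i (u i) (hmem u hu i)
    -- conclude
    have hPsplit : (∏ j, φ j (u j)) =
        φ i (u i) * ∏ j ∈ Finset.univ.erase i, φ j (u j) :=
      (Finset.mul_prod_erase Finset.univ (fun j => φ j (u j)) (Finset.mem_univ i)).symm
    rw [hD1, hPsplit]
    have hL : pd i (fun v => h v / H i v ^ 2 * pd i ψ v) u
        = deriv (fun t : ℝ => h (u + t • (Pi.single i 1 : Fin n → ℝ))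
            / H i (u + t • (Pi.single i 1 : Fin n → ℝ)) ^ 2
            * pd i ψ (u + t • (Pi.single i 1 : Fin n → ℝ))) 0 := rfl
    rw [hL, h4.deriv]
    apply mul_left_cancel₀ (hRpos u hu).ne'
    linear_combination (∏ j ∈ Finset.univ.erase i, φ j (u j)) * deriv (φ i) (u i) * h2
      + (h u / H i u ^ 2) * R u ^ 2 * (∏ j ∈ Finset.univ.erase i, φ j (u j)) * hodei
  -- assemble
  have hsum : ∑ i, pd i (fun v => h v / H i v ^ 2 * pd i ψ v) u
      = (∑ i, pd i (fun v => h v / H i v ^ 2 * pd i R v) u) * ∏ j, φ j (u j)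
        - h u * (∑ i, q i (u i) / H i u ^ 2) * R u * ∏ j, φ j (u j) := by
    rw [Finset.sum_congr rfl fun i _ => key i, Finset.sum_sub_distrib, ← Finset.sum_mul]
    congr 1
    rw [← Finset.sum_mul, ← Finset.sum_mul]
    congr 2
    rw [Finset.mul_sum]
    exact Finset.sum_congr rfl fun i _ => by ring
  rw [hsum, hψ u]
  have E := hReq u hu
  have hinv : (h u)⁻¹ * h u = 1 := inv_mul_cancel₀ (hhne u hu)
  linear_combination (∏ j, φ j (u j)) * E
    - (∑ i, q i (u i) / H i u ^ 2) * R u * (∏ j, φ j (u j)) * hinv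
end

section
/- Let n ≥ 2, let b₁ > b₂ > ⋯ > bₙ be real numbers, and let D = {λ ∈ ℝⁿ : λ¹ > b₁ > λ² > b₂ > ⋯ > b_{n−1} > λⁿ > bₙ}. Define a(x) = 4∏_{k=1}^{n}(x − bₖ) and the diagonal metric on D with Hᵢ² = ∏_{j≠i}(λⁱ − λʲ)/a(λⁱ) (which is positive on D), h = H₁⋯Hₙ, Δψ = h⁻¹ ∑ᵢ ∂ᵢ((h/Hᵢ²)∂ᵢψ). Let v₁,…,vₙ : ℝ → ℝ be continuous and V(λ) = ∑_{i=1}^{n} vᵢ(λⁱ)/∏_{j≠i}(λⁱ − λʲ). Let k, k₀, k₁, …, k_{n−2} be real constants, set J₁ = (b₁, ∞) and Jᵢ = (bᵢ, b_{i−1}) for 2 ≤ i ≤ n, and suppose φᵢ : Jᵢ → ℝ are C² and satisfy φᵢ''(x) + (a'(x)/(2a(x)))φᵢ'(x) + (1/a(x))[∑_{m=0}^{n−2} kₘ xᵐ + k² x^{n−1} − vᵢ(x)]φᵢ(x) = 0. Then ψ(λ) = ∏_{i=1}^{n} φᵢ(λⁱ) satisfies Δψ + (k² − V)ψ = 0 on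 D. -/
open Finset Function Filter Topology

open Polynomial in
theorem sum_div_prod_erase_sub_eq_top_coeff {F ι : Type*} [Field F] [Fintype ι] [DecidableEq ι]
    [Nonempty ι] {x : ι → F} (hx : Injective x) (c : ℕ → F) (d : F) :
    ∑ i, (∑ m ∈ range (Fintype.card ι - 1), c m * x i ^ m + d * x i ^ (Fintype.card ι - 1))
      / ∏ j ∈ univ.erase i, (x i - x j) = d := by
  set N := Fintype.card ι - 1
  set p : F[X] := ∑ m ∈ range N, C (c m) * X ^ m + C d * X ^ N
  have hp : p.natDegree ≤ N :=
    natDegree_add_le_of_degree_le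
      (natDegree_sum_le_of_forall_le _ _ fun m hm =>
        (natDegree_C_mul_X_pow_le _ _).trans (mem_range.1 hm).le)
      (natDegree_C_mul_X_pow_le _ _)
  have hdeg : p.degree < #(univ : Finset ι) := by
    rw [card_univ]
    refine (degree_le_of_natDegree_le hp).trans_lt ?_
    exact_mod_cast Nat.sub_lt Fintype.card_pos one_pos
  have := Lagrange.coeff_eq_sum hx.injOn hdeg
  rw [card_univ] at this
  convert this.symm using 1
  · simp [p, eval_finsetSum]
  · simp [p, N, coeff_X_pow]

theorem exists_prod_erase_prod_erase_sub_update {R ι : Type*} [CommRing R] [Fintype ι]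
    [DecidableEq ι] (l : ι → R) (i : ι) :
    ∃ c : R, ∀ x, ∏ j ∈ univ.erase i, ∏ m ∈ univ.erase j, (update l i x j - update l i x m)
      = c * ∏ j ∈ univ.erase i, (update l i x i - update l i x j) := by
  refine ⟨(-1) ^ (Fintype.card ι - 1) *
    ∏ j ∈ univ.erase i, ∏ m ∈ (univ.erase j).erase i, (l j - l m), fun x => ?_⟩
  have hj : ∀ j ∈ univ.erase i, ∏ m ∈ univ.erase j, (update l i x j - update l i x m)
      = -(x - l j) * ∏ m ∈ (univ.erase j).erase i, (l j - l m) := by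
    intro j hj
    have hji := ne_of_mem_erase hj
    rw [← mul_prod_erase _ _ (mem_erase.2 ⟨hji.symm, mem_univ i⟩)]
    simp only [update_self, update_of_ne hji]
    congr 1
    · ring
    · exact prod_congr rfl fun m hm => by rw [update_of_ne (ne_of_mem_erase hm)]
  have hi : ∏ j ∈ univ.erase i, (update l i x i - update l i x j) = ∏ j ∈ univ.erase i, (x - l j) :=
    prod_congr rfl fun j hj => by rw [update_self, update_of_ne (ne_of_mem_erase hj)]
  rw [prod_congr rfl hj, prod_mul_distrib, prod_neg, card_erase_of_mem (mem_univ i), card_univ, hi]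
  ring

theorem prod_sqrt_div_eq_sqrt {ι : Type*} [Fintype ι] [DecidableEq ι] {f : ι → ℝ}
    (hf : ∀ j, 0 ≤ f j) {i : ι} (hi : 0 < f i) :
    (∏ j, √(f j)) / f i = √((∏ j ∈ univ.erase i, f j) / f i) := by
  rw [← mul_prod_erase univ _ (mem_univ i), ← Real.sqrt_prod _ fun j _ => hf j,
    Real.sqrt_div' _ hi.le]
  nth_rw 2 [← Real.mul_self_sqrt hi.le]
  rw [mul_div_mul_left _ _ (Real.sqrt_pos.2 hi).ne']

theorem hasDerivAt_sqrt_mul {A f : ℝ → ℝ} {A' f' x : ℝ} (hA : HasDerivAt A A' x) (hAx : 0 < A x)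
    (hf : HasDerivAt f f' x) :
    HasDerivAt (fun y => √(A y) * f y) (√(A x) * (f' + A' / (2 * A x) * f x)) x := by
  refine ((hA.sqrt hAx.ne').mul hf).congr_deriv ?_
  field_simp
  rw [Real.sq_sqrt hAx.le]
  ring

theorem pd_eq_of_eventually_eq {n : ℕ} {i : Fin n} {f : (Fin n → ℝ) → ℝ} {g : ℝ → ℝ}
    {l : Fin n → ℝ} {g' : ℝ} (hfg : ∀ᶠ x in 𝓝 (l i), f (update l i x) = g x)
    (hg : HasDerivAt g g' (l i)) : pd i f l = g' := by
  have hline : ∀ t : ℝ, l + t • Pi.single i 1 = update l i (l i + t) := by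
    intro t; ext j; rcases eq_or_ne j i with rfl | hj <;> simp [*]
  have hshift : Tendsto (fun t : ℝ => l i + t) (𝓝 0) (𝓝 (l i)) := by
    simpa using (continuous_const_add (l i)).tendsto 0
  refine HasLineDerivAt.lineDeriv ?_
  refine (HasDerivAt.comp_const_add (l i) 0 (by simpa using hg)).congr_of_eventuallyEq ?_
  filter_upwards [hshift.eventually hfg] with t ht
  rw [hline, ht]

theorem pd_prod_apply {n : ℕ} {i : Fin n} {φ : Fin n → ℝ → ℝ} {l : Fin n → ℝ} {d : ℝ}
    (hφ : HasDerivAt (φ i) d (l i)) :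
    pd i (fun w => ∏ j, φ j (w j)) l = d * ∏ j ∈ univ.erase i, φ j (l j) := by
  refine pd_eq_of_eventually_eq (.of_forall fun x => ?_) (hφ.mul_const _)
  rw [← mul_prod_erase univ _ (mem_univ i), update_self]
  exact congrArg _ (prod_congr rfl fun j hj => by rw [update_of_ne (ne_of_mem_erase hj)])

section Interlacing

variable {n : ℕ} {b l : Fin n → ℝ} {i : Fin n} {x : ℝ}

def interlacingSet (b : Fin n → ℝ) : Set (Fin n → ℝ) :=
  {l | (∀ i, b i < l i) ∧ ∀ i j : Fin n, i < j → l j < b i}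

def interlacingInterval (b : Fin n → ℝ) (i : Fin n) : Set ℝ :=
  {x | b i < x ∧ ∀ j, j < i → x < b j}

theorem isOpen_interlacingInterval (b : Fin n → ℝ) (i : Fin n) :
    IsOpen (interlacingInterval b i) := by
  simp only [interlacingInterval, Set.ofPred_and, Set.ofPred_forall]
  exact (isOpen_lt' _).inter (isOpen_iInter_of_finite fun j =>
    isOpen_iInter_of_finite fun _ => isOpen_gt' _)

theorem apply_mem_interlacingInterval (hl : l ∈ interlacingSet b) (i : Fin n) :
    l i ∈ interlacingInterval b i :=
  ⟨hl.1 i, fun j hj => hl.2 j i hj⟩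

theorem update_mem_interlacingSet (hl : l ∈ interlacingSet b)
    (hx : x ∈ interlacingInterval b i) : update l i x ∈ interlacingSet b := by
  refine ⟨fun j => ?_, fun j j' hjj' => ?_⟩
  · rcases eq_or_ne j i with rfl | hj
    · simpa using hx.1
    · simpa [update_of_ne hj] using hl.1 j
  · rcases eq_or_ne j' i with rfl | hj
    · simpa using hx.2 j hjj'
    · simpa [update_of_ne hj] using hl.2 j j' hjj'

theorem strictAnti_of_mem_interlacingSet (hl : l ∈ interlacingSet b) : StrictAnti l :=
  fun _ _ hij => (hl.2 _ _ hij).trans (hl.1 _)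

theorem prod_erase_sub_div_pos (hb : StrictAnti b) (hl : l ∈ interlacingSet b) (i : Fin n) :
    0 < (∏ j ∈ univ.erase i, (l i - l j)) / (4 * ∏ k, (l i - b k)) := by
  have hpair : ∀ j ∈ univ.erase i, 0 < (l i - l j) * (l i - b j) := by
    intro j hj
    rcases lt_or_gt_of_ne (ne_of_mem_erase hj) with hji | hij
    · have := hl.2 j i hji; have := hl.1 j
      exact mul_pos_of_neg_of_neg (by linarith) (by linarith)
    · have := hl.2 i j hij; have := hl.1 i; have := hb hij
      exact mul_pos (by linarith) (by linarith)
  have hprod : 0 < (∏ j ∈ univ.erase i, (l i - l j)) * ∏ k, (l i - b k) := by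
    rw [← mul_prod_erase univ _ (mem_univ i), mul_left_comm, ← prod_mul_distrib]
    exact mul_pos (sub_pos.2 (hl.1 i)) (prod_pos hpair)
  have hne : ∏ k, (l i - b k) ≠ 0 := right_ne_zero_of_mul hprod.ne'
  have hdiv := div_pos hprod (mul_pos four_pos (mul_self_pos.2 hne))
  rwa [← mul_assoc, mul_div_mul_right _ _ hne] at hdiv

end Interlacing

section EllipticMetric

variable {n : ℕ} {b : Fin n → ℝ} {a : ℝ → ℝ} {H2 : Fin n → (Fin n → ℝ) → ℝ}
  {h : (Fin n → ℝ) → ℝ}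

theorem scaleFactorSq_pos (hb : StrictAnti b) (ha : ∀ x, a x = 4 * ∏ k, (x - b k))
    (hH2 : ∀ i l, H2 i l = (∏ j ∈ univ.erase i, (l i - l j)) / a (l i))
    {l : Fin n → ℝ} (hl : l ∈ interlacingSet b) (i : Fin n) : 0 < H2 i l := by
  rw [hH2, ha]
  exact prod_erase_sub_div_pos hb hl i

theorem volumeDensity_pos (hb : StrictAnti b) (ha : ∀ x, a x = 4 * ∏ k, (x - b k))
    (hH2 : ∀ i l, H2 i l = (∏ j ∈ univ.erase i, (l i - l j)) / a (l i))
    (hh : ∀ l, h l = ∏ i, √(H2 i l)) {l : Fin n → ℝ} (hl : l ∈ interlacingSet b) : 0 < h l := by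
  rw [hh]
  exact prod_pos fun i _ => Real.sqrt_pos.2 (scaleFactorSq_pos hb ha hH2 hl i)

theorem exists_weight_eq_sqrt (hH2 : ∀ i l, H2 i l = (∏ j ∈ univ.erase i, (l i - l j)) / a (l i))
    (hh : ∀ l, h l = ∏ i, √(H2 i l)) (l : Fin n → ℝ) (i : Fin n) :
    ∃ c, ∀ x, (∀ j, 0 < H2 j (update l i x)) →
      h (update l i x) / H2 i (update l i x) = √(c * a x) := by
  obtain ⟨c, hc⟩ := exists_prod_erase_prod_erase_sub_update l i
  refine ⟨c / ∏ j ∈ univ.erase i, a (l j), fun x hpos => ?_⟩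
  rw [hh, prod_sqrt_div_eq_sqrt (fun j => (hpos j).le) (hpos i)]
  congr 1
  have hai : ∀ j ∈ univ.erase i, a (update l i x j) = a (l j) := fun j hj => by
    rw [update_of_ne (ne_of_mem_erase hj)]
  have hA : ∏ j ∈ univ.erase i, a (l j) ≠ 0 := prod_ne_zero_iff.2 fun j hj => by
    have := (hpos j).ne'
    rw [hH2, hai j hj] at this
    exact (div_ne_zero_iff.1 this).2
  have hi := (hpos i).ne'
  rw [hH2, update_self] at hi
  obtain ⟨hnum, hax⟩ := div_ne_zero_iff.1 hi
  simp only [hH2, prod_div_distrib, prod_congr rfl hai, hc, update_self]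
  field_simp

theorem pd_weight_mul_pd_prod (hb : StrictAnti b) (ha : ∀ x, a x = 4 * ∏ k, (x - b k))
    (hH2 : ∀ i l, H2 i l = (∏ j ∈ univ.erase i, (l i - l j)) / a (l i))
    (hh : ∀ l, h l = ∏ i, √(H2 i l)) {φ : Fin n → ℝ → ℝ} {i : Fin n}
    (hφ : ContDiffOn ℝ 2 (φ i) (interlacingInterval b i)) {l : Fin n → ℝ}
    (hl : l ∈ interlacingSet b) :
    pd i (fun w => h w / H2 i w * pd i (fun w => ∏ j, φ j (w j)) w) l
      = h l / H2 i l * (deriv (deriv (φ i)) (l i)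
          + deriv a (l i) / (2 * a (l i)) * deriv (φ i) (l i)) * ∏ j ∈ univ.erase i, φ j (l j) := by
  set P := ∏ j ∈ univ.erase i, φ j (l j)
  have hJ := isOpen_interlacingInterval b i
  have hli := apply_mem_interlacingInterval hl i
  obtain ⟨c, hc⟩ := exists_weight_eq_sqrt hH2 hh l i
  have hweight : ∀ x ∈ interlacingInterval b i,
      h (update l i x) / H2 i (update l i x) = √(c * a x) := fun x hx =>
    hc x (scaleFactorSq_pos hb ha hH2 (update_mem_interlacingSet hl hx))
  have hweight_l : h l / H2 i l = √(c * a (l i)) := by simpa using hweight (l i) hli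
  have hca : 0 < c * a (l i) := Real.sqrt_pos.1 <| hweight_l ▸
    div_pos (volumeDensity_pos hb ha hH2 hh hl) (scaleFactorSq_pos hb ha hH2 hl i)
  have hdφ : ∀ x ∈ interlacingInterval b i, HasDerivAt (φ i) (deriv (φ i) x) x := fun x hx =>
    ((hφ.differentiableOn two_ne_zero).differentiableAt (hJ.mem_nhds hx)).hasDerivAt
  have hddφ : HasDerivAt (deriv (φ i)) (deriv (deriv (φ i)) (l i)) (l i) :=
    (((hφ.deriv_of_isOpen hJ (by norm_num) : ContDiffOn ℝ 1 _ _).differentiableOn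
      one_ne_zero).differentiableAt (hJ.mem_nhds hli)).hasDerivAt
  have hda : HasDerivAt a (deriv a (l i)) (l i) := by
    refine (DifferentiableAt.hasDerivAt ?_)
    rw [funext ha]
    fun_prop
  refine pd_eq_of_eventually_eq (g := fun x => √(c * a x) * (deriv (φ i) x * P)) ?_ ?_
  · filter_upwards [hJ.mem_nhds hli] with x hx
    rw [hweight x hx, pd_prod_apply (by rw [update_self]; exact hdφ x hx)]
    congr 2
    exact prod_congr rfl fun j hj => by rw [update_of_ne (ne_of_mem_erase hj)]
  · refine (hasDerivAt_sqrt_mul (hda.const_mul c) hca (hddφ.mul_const P)).congr_deriv ?_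
    have hc0 : c ≠ 0 := left_ne_zero_of_mul hca.ne'
    rw [hweight_l]
    field_simp

end EllipticMetric

theorem elliptic_metric_separable_general (n : ℕ) (hn : 2 ≤ n)
    (b : Fin n → ℝ) (hb : StrictAnti b)
    (D : Set (Fin n → ℝ))
    (hD : D = {l | (∀ i, b i < l i) ∧ ∀ i j : Fin n, i < j → l j < b i})
    (a : ℝ → ℝ) (ha : ∀ x, a x = 4 * ∏ k, (x - b k))
    (H2 : Fin n → (Fin n → ℝ) → ℝ)
    (hH2 : ∀ i l, H2 i l = (∏ j ∈ Finset.univ.erase i, (l i - l j)) / a (l i))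
    (h : (Fin n → ℝ) → ℝ) (hh : ∀ l, h l = ∏ i, Real.sqrt (H2 i l))
    (v : Fin n → ℝ → ℝ)
    (V : (Fin n → ℝ) → ℝ)
    (hV : ∀ l, V l = ∑ i : Fin n, v i (l i) / ∏ j ∈ Finset.univ.erase i, (l i - l j))
    (k : ℝ) (kc : ℕ → ℝ)
    (J : Fin n → Set ℝ) (hJ : ∀ i, J i = {x | b i < x ∧ ∀ j, j < i → x < b j})
    (φ : Fin n → ℝ → ℝ) (hφ : ∀ i, ContDiffOn ℝ 2 (φ i) (J i))
    (hode : ∀ i, ∀ x ∈ J i,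
      deriv (deriv (φ i)) x + deriv a x / (2 * a x) * deriv (φ i) x
        + (1 / a x) * ((∑ m ∈ Finset.range (n - 1), kc m * x ^ m)
            + k ^ 2 * x ^ (n - 1) - v i x) * φ i x = 0)
    (ψ : (Fin n → ℝ) → ℝ) (hψ : ∀ l, ψ l = ∏ i, φ i (l i)) :
    ∀ l ∈ D,
      (h l)⁻¹ * ∑ i, pd i (fun w => h w / H2 i w * pd i ψ w) l
        + (k ^ 2 - V l) * ψ l = 0 := by
  obtain rfl : ψ = fun l => ∏ i, φ i (l i) := funext hψ
  obtain rfl : J = interlacingInterval b := funext hJ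
  subst hD
  rintro l (hl : l ∈ interlacingSet b)
  have : Nonempty (Fin n) := ⟨⟨0, by omega⟩⟩
  have hlagrange := sum_div_prod_erase_sub_eq_top_coeff
    (strictAnti_of_mem_interlacingSet hl).injective kc (k ^ 2)
  rw [Fintype.card_fin] at hlagrange
  have hterm : ∀ i, pd i (fun w => h w / H2 i w * pd i (fun l => ∏ i, φ i (l i)) w) l
      = -h l * ((∑ m ∈ range (n - 1), kc m * l i ^ m + k ^ 2 * l i ^ (n - 1) - v i (l i))
          / ∏ j ∈ univ.erase i, (l i - l j)) * ∏ j, φ j (l j) := by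
    intro i
    have hai : a (l i) ≠ 0 := by
      have := (scaleFactorSq_pos hb ha hH2 hl i).ne'
      rw [hH2] at this
      exact (div_ne_zero_iff.1 this).2
    rw [pd_weight_mul_pd_prod hb ha hH2 hh (hφ i) hl, ← mul_prod_erase univ _ (mem_univ i),
      eq_neg_of_add_eq_zero_left (hode i (l i) (apply_mem_interlacingInterval hl i)), hH2]
    field_simp
  have hh0 := (volumeDensity_pos hb ha hH2 hh hl).ne'
  rw [sum_congr rfl fun i _ => hterm i, ← sum_mul, ← mul_sum, hV]
  simp only [sub_div, sum_sub_distrib, hlagrange]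
  field_simp
  ring

/-- **Separability of the n-elliptic metric in the Schrödinger equation.** On the domain
`D = {λ : λ¹ > b₁ > λ² > ⋯ > b_{n-1} > λⁿ > bₙ}`, with `a(x) = 4∏ₖ(x - bₖ)`,
`Hᵢ² = ∏_{j≠i}(λⁱ - λʲ)/a(λⁱ)`, `h = H₁⋯Hₙ`, and potential
`V(λ) = ∑ᵢ vᵢ(λⁱ)/∏_{j≠i}(λⁱ - λʲ)`: whenever the `φᵢ` are `C²` on the intervals
`Jᵢ` and satisfy the separation equations
`φᵢ'' + (a'/(2a))φᵢ' + (1/a)[∑ₘ kₘ xᵐ + k² x^{n-1} - vᵢ]φᵢ = 0`, the product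
`ψ(λ) = ∏ᵢ φᵢ(λⁱ)` satisfies `Δψ + (k² - V)ψ = 0` on `D`. -/
theorem elliptic_metric_separable (n : ℕ) (hn : 2 ≤ n)
    (b : Fin n → ℝ) (hb : StrictAnti b)
    (D : Set (Fin n → ℝ))
    (hD : D = {l | (∀ i, b i < l i) ∧ ∀ i j : Fin n, i < j → l j < b i})
    (a : ℝ → ℝ) (ha : ∀ x, a x = 4 * ∏ k, (x - b k))
    (H2 : Fin n → (Fin n → ℝ) → ℝ)
    (hH2 : ∀ i l, H2 i l = (∏ j ∈ Finset.univ.erase i, (l i - l j)) / a (l i))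
    (h : (Fin n → ℝ) → ℝ) (hh : ∀ l, h l = ∏ i, Real.sqrt (H2 i l))
    (v : Fin n → ℝ → ℝ) (hv : ∀ i, Continuous (v i))
    (V : (Fin n → ℝ) → ℝ)
    (hV : ∀ l, V l = ∑ i : Fin n, v i (l i) / ∏ j ∈ Finset.univ.erase i, (l i - l j))
    (k : ℝ) (kc : ℕ → ℝ)
    (J : Fin n → Set ℝ) (hJ : ∀ i, J i = {x | b i < x ∧ ∀ j, j < i → x < b j})
    (φ : Fin n → ℝ → ℝ) (hφ : ∀ i, ContDiffOn ℝ 2 (φ i) (J i))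
    (hode : ∀ i, ∀ x ∈ J i,
      deriv (deriv (φ i)) x + deriv a x / (2 * a x) * deriv (φ i) x
        + (1 / a x) * ((∑ m ∈ Finset.range (n - 1), kc m * x ^ m)
            + k ^ 2 * x ^ (n - 1) - v i x) * φ i x = 0)
    (ψ : (Fin n → ℝ) → ℝ) (hψ : ∀ l, ψ l = ∏ i, φ i (l i)) :
    ∀ l ∈ D,
      (h l)⁻¹ * ∑ i, pd i (fun w => h w / H2 i w * pd i ψ w) l
        + (k ^ 2 - V l) * ψ l = 0 :=
  elliptic_metric_separable_general n hn b hb D hD a ha H2 hH2 h hh v V hV k kc J hJ φ hφ hode ψ hψ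
end
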